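/- arXiv:1409.1778 — 3 statements merged into one kernel-verified Lean document; each statement's English description precedes it below -/
import Mathlib

section
/- Fix masses m, M with 2M > m > 0. There exist constants c ∈ (0,1) and C > 0, depending only on m and M, such that for all ξ₁, ξ₂ ∈ ℝ³ and signs s₁, s₂ ∈ {+1,−1}: if either (s₁,s₂) = (+1,−1), or ((s₁,s₂) = (−1,+1) and ⟨ξ₁−ξ₂⟩_m ≤ c · min(⟨ξ₁⟩_M, ⟨ξ₂⟩_M)), then |μ^{s₁,s₂}(ξ₁,ξ₂)| ≥ C⁻¹ max(⟨ξ₁−ξ₂⟩, ⟨ξ₁⟩, ⟨ξ₂⟩), where ⟨·⟩ := ⟨·⟩₁. -/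
noncomputable section

/-- The Japanese bracket `⟨ξ⟩_a := √(|ξ|² + a²)` for `ξ ∈ ℝ³`, `a ≥ 0`. -/
def jbracket (a : ℝ) (ξ : EuclideanSpace ℝ (Fin 3)) : ℝ :=
  Real.sqrt (‖ξ‖ ^ 2 + a ^ 2)

/-- The resonance function `μ^{s₁,s₂}(ξ₁,ξ₂) := ⟨ξ₁−ξ₂⟩_m + s₁⟨ξ₁⟩_M − s₂⟨ξ₂⟩_M`. -/
def resonance (m M s₁ s₂ : ℝ) (ξ₁ ξ₂ : EuclideanSpace ℝ (Fin 3)) : ℝ :=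
  jbracket m (ξ₁ - ξ₂) + s₁ * jbracket M ξ₁ - s₂ * jbracket M ξ₂

lemma jbracket_nonneg (a : ℝ) (ξ : EuclideanSpace ℝ (Fin 3)) : 0 ≤ jbracket a ξ :=
  Real.sqrt_nonneg _

lemma min_mul_jbracket_le (a : ℝ) (ha : 0 < a) (ξ : EuclideanSpace ℝ (Fin 3)) :
    min a 1 * jbracket 1 ξ ≤ jbracket a ξ := by
  have h0 : (0:ℝ) ≤ min a 1 := le_min ha.le zero_le_one
  have h1 : min a 1 ≤ 1 := min_le_right _ _
  have h2 : min a 1 ≤ a := min_le_left _ _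
  have key : (min a 1) ^ 2 * (‖ξ‖ ^ 2 + 1 ^ 2) ≤ ‖ξ‖ ^ 2 + a ^ 2 := by
    nlinarith [sq_nonneg ‖ξ‖, pow_le_pow_left₀ h0 h1 2, pow_le_pow_left₀ h0 h2 2]
  calc min a 1 * jbracket 1 ξ
      = Real.sqrt ((min a 1) ^ 2 * (‖ξ‖ ^ 2 + 1 ^ 2)) := by
        rw [jbracket, Real.sqrt_mul (sq_nonneg _), Real.sqrt_sq h0]
    _ ≤ Real.sqrt (‖ξ‖ ^ 2 + a ^ 2) := Real.sqrt_le_sqrt key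
    _ = jbracket a ξ := rfl

lemma jbracket_le_max_mul (a : ℝ) (ha : 0 < a) (ξ : EuclideanSpace ℝ (Fin 3)) :
    jbracket a ξ ≤ max a 1 * jbracket 1 ξ := by
  have h0 : (0:ℝ) ≤ max a 1 := le_trans zero_le_one (le_max_right _ _)
  have h1' : (1:ℝ) * 1 ≤ max a 1 * max a 1 := mul_le_mul (le_max_right _ _) (le_max_right _ _) zero_le_one h0
  have h1 : (1:ℝ) ≤ max a 1 := le_max_right _ _
  have h2 : a ≤ max a 1 := le_max_left _ _
  have key : ‖ξ‖ ^ 2 + a ^ 2 ≤ (max a 1) ^ 2 * (‖ξ‖ ^ 2 + 1 ^ 2) := by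
    nlinarith [sq_nonneg ‖ξ‖, h1', pow_le_pow_left₀ ha.le h2 2]
  calc jbracket a ξ ≤ Real.sqrt ((max a 1) ^ 2 * (‖ξ‖ ^ 2 + 1 ^ 2)) := Real.sqrt_le_sqrt key
    _ = max a 1 * jbracket 1 ξ := by
        rw [jbracket, Real.sqrt_mul (sq_nonneg _), Real.sqrt_sq h0]

/-- Case 1 lower bound (high modulation): if `(s₁,s₂) = (+,−)`, or `(s₁,s₂) = (−,+)` and
`⟨ξ₁−ξ₂⟩_m ≤ c·min(⟨ξ₁⟩_M,⟨ξ₂⟩_M)`, then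
`|μ^{s₁,s₂}(ξ₁,ξ₂)| ≳ max(⟨ξ₁−ξ₂⟩,⟨ξ₁⟩,⟨ξ₂⟩)`. -/
theorem resonance_case1_lower_bound (m M : ℝ) (hm : 0 < m) (hmM : m < 2 * M) :
    ∃ c ∈ Set.Ioo (0 : ℝ) 1, ∃ C > (0 : ℝ),
      ∀ ξ₁ ξ₂ : EuclideanSpace ℝ (Fin 3), ∀ s₁ s₂ : ℝ,
        (s₁ = 1 ∨ s₁ = -1) → (s₂ = 1 ∨ s₂ = -1) →
        ((s₁ = 1 ∧ s₂ = -1) ∨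
          (s₁ = -1 ∧ s₂ = 1 ∧
            jbracket m (ξ₁ - ξ₂) ≤ c * min (jbracket M ξ₁) (jbracket M ξ₂))) →
        |resonance m M s₁ s₂ ξ₁ ξ₂| ≥
          C⁻¹ * max (jbracket 1 (ξ₁ - ξ₂)) (max (jbracket 1 ξ₁) (jbracket 1 ξ₂)) := by
  have hM : 0 < M := by linarith
  set k : ℝ := min m (min M 1) with hk_def
  have hk : 0 < k := lt_min hm (lt_min hM one_pos)
  set K : ℝ := max M 1 / min m 1 with hK_def
  have hminm : 0 < min m 1 := lt_min hm one_pos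
  have hmaxM : 0 < max M 1 := lt_of_lt_of_le one_pos (le_max_right _ _)
  have hK0 : 0 < K := div_pos hmaxM hminm
  set D : ℝ := k / (K + 2) with hD_def
  have hD : 0 < D := div_pos hk (by linarith)
  refine ⟨1/2, ⟨by norm_num, by norm_num⟩, D⁻¹, by positivity, ?_⟩
  intro ξ₁ ξ₂ s₁ s₂ hs₁ hs₂ hcase
  rw [inv_inv]
  set A := jbracket 1 (ξ₁ - ξ₂) with hA_def
  set B := jbracket 1 ξ₁ with hB_def
  set Cb := jbracket 1 ξ₂ with hCb_def
  have hA0 : 0 ≤ A := jbracket_nonneg _ _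
  have hB0 : 0 ≤ B := jbracket_nonneg _ _
  have hCb0 : 0 ≤ Cb := jbracket_nonneg _ _
  have hmaxsum : max A (max B Cb) ≤ A + B + Cb :=
    max_le (by linarith) (max_le (by linarith) (by linarith))
  have hjmA : min m 1 * A ≤ jbracket m (ξ₁ - ξ₂) := min_mul_jbracket_le m hm _
  have hjMB : min M 1 * B ≤ jbracket M ξ₁ := min_mul_jbracket_le M hM _
  have hjMC : min M 1 * Cb ≤ jbracket M ξ₂ := min_mul_jbracket_le M hM _
  have hkm : k ≤ min m 1 := le_min (min_le_left _ _) (le_trans (min_le_right _ _) (min_le_right _ _))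
  have hkM : k ≤ min M 1 := le_trans (min_le_right _ _) (le_refl _)
  have hjm0 : 0 ≤ jbracket m (ξ₁ - ξ₂) := jbracket_nonneg _ _
  have hjM10 : 0 ≤ jbracket M ξ₁ := jbracket_nonneg _ _
  have hjM20 : 0 ≤ jbracket M ξ₂ := jbracket_nonneg _ _
  have hDk : D ≤ k := by
    rw [hD_def]
    exact div_le_self hk.le (by linarith)
  rcases hcase with ⟨h1, h2⟩ | ⟨h1, h2, h3⟩
  · -- (s₁, s₂) = (1, -1): μ is a sum of three nonnegative terms
    subst h1; subst h2
    have hres : resonance m M 1 (-1) ξ₁ ξ₂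
        = jbracket m (ξ₁ - ξ₂) + jbracket M ξ₁ + jbracket M ξ₂ := by
      rw [resonance]; ring
    rw [hres, abs_of_nonneg (by linarith)]
    have h1 : k * A ≤ jbracket m (ξ₁ - ξ₂) :=
      le_trans (mul_le_mul_of_nonneg_right hkm hA0) hjmA
    have h2 : k * B ≤ jbracket M ξ₁ :=
      le_trans (mul_le_mul_of_nonneg_right hkM hB0) hjMB
    have h3 : k * Cb ≤ jbracket M ξ₂ :=
      le_trans (mul_le_mul_of_nonneg_right hkM hCb0) hjMC
    have : D * max A (max B Cb) ≤ k * (A + B + Cb) := by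
      have := mul_le_mul hDk hmaxsum (le_max_of_le_left hA0) hk.le
      linarith [this]
    linarith
  · -- (s₁, s₂) = (-1, 1)
    subst h1; subst h2
    have hres : resonance m M (-1) 1 ξ₁ ξ₂
        = jbracket m (ξ₁ - ξ₂) - jbracket M ξ₁ - jbracket M ξ₂ := by
      rw [resonance]; ring
    have hmin1 : min (jbracket M ξ₁) (jbracket M ξ₂) ≤ jbracket M ξ₁ := min_le_left _ _
    have hmin2 : min (jbracket M ξ₁) (jbracket M ξ₂) ≤ jbracket M ξ₂ := min_le_right _ _
    have hjm1 : 2 * jbracket m (ξ₁ - ξ₂) ≤ jbracket M ξ₁ := by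
      have := h3.trans (by linarith : (1/2 : ℝ) * min (jbracket M ξ₁) (jbracket M ξ₂) ≤ (1/2) * jbracket M ξ₁)
      linarith
    have hjm2 : 2 * jbracket m (ξ₁ - ξ₂) ≤ jbracket M ξ₂ := by
      have := h3.trans (by linarith : (1/2 : ℝ) * min (jbracket M ξ₁) (jbracket M ξ₂) ≤ (1/2) * jbracket M ξ₂)
      linarith
    have habs : |resonance m M (-1) 1 ξ₁ ξ₂|
        = jbracket M ξ₁ + jbracket M ξ₂ - jbracket m (ξ₁ - ξ₂) := by
      rw [hres, abs_of_nonpos (by linarith)]; ring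
    rw [habs]
    -- A is controlled by B:  2 * A ≤ K * B
    have hjMup : jbracket M ξ₁ ≤ max M 1 * B := jbracket_le_max_mul M hM _
    have h2A : 2 * (min m 1 * A) ≤ max M 1 * B := by
      calc 2 * (min m 1 * A) ≤ 2 * jbracket m (ξ₁ - ξ₂) := by linarith
        _ ≤ jbracket M ξ₁ := hjm1
        _ ≤ max M 1 * B := hjMup
    have h2A' : 2 * A ≤ K * B := by
      rw [hK_def, div_mul_eq_mul_div, le_div_iff₀ hminm]
      nlinarith
    -- main estimate
    have hDK : D * (K + 2) = k := div_mul_cancel₀ k (by linarith)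
    have hkB : k * B ≤ jbracket M ξ₁ :=
      le_trans (mul_le_mul_of_nonneg_right hkM hB0) hjMB
    have hkC : k * Cb ≤ jbracket M ξ₂ :=
      le_trans (mul_le_mul_of_nonneg_right hkM hCb0) hjMC
    have key : D * (A + B + Cb) ≤
        jbracket M ξ₁ + jbracket M ξ₂ - jbracket m (ξ₁ - ξ₂) := by
      have hKC : 0 ≤ K * Cb := mul_nonneg hK0.le hCb0
      have hstep : 2 * (A + B + Cb) ≤ (K + 2) * (B + Cb) := by nlinarith
      have hmul : D * (2 * (A + B + Cb)) ≤ D * ((K + 2) * (B + Cb)) :=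
        mul_le_mul_of_nonneg_left hstep hD.le
      have hDk2 : D * ((K + 2) * (B + Cb)) = k * (B + Cb) := by
        rw [← mul_assoc, hDK]
      linarith
    have : D * max A (max B Cb) ≤ D * (A + B + Cb) :=
      mul_le_mul_of_nonneg_left hmaxsum hD.le
    linarith
end
end

section
/- Fix masses m, M with 2M > m > 0 and a constant c > 0. There exists C > 0, depending only on m, M and c, such that for all nonzero ξ₁, ξ₂ ∈ ℝ³ and signs s₁, s₂ ∈ {+1,−1}: if either s₁ = s₂, or ((s₁,s₂) = (−1,+1) and ⟨ξ₁−ξ₂⟩_m ≥ c · min(⟨ξ₁⟩_M, ⟨ξ₂⟩_M)), then |μ^{s₁,s₂}(ξ₁,ξ₂)| ≥ C⁻¹ (⟨ξ₁⟩·⟨ξ₂⟩ / ⟨ξ₁−ξ₂⟩) · ∠(s₁ξ₁, s₂ξ₂)², where ⟨·⟩ := ⟨·⟩₁. -/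
noncomputable section

open Real
open scoped RealInnerProductSpace

namespace ResAux

open Real

lemma jb_nonneg (a : ℝ) (ξ : EuclideanSpace ℝ (Fin 3)) : 0 ≤ jbracket a ξ :=
  Real.sqrt_nonneg _

lemma jb_sq (a : ℝ) (ξ : EuclideanSpace ℝ (Fin 3)) : jbracket a ξ ^ 2 = ‖ξ‖ ^ 2 + a ^ 2 :=
  Real.sq_sqrt (by positivity)

lemma jb_pos {a : ℝ} (ha : 0 < a) (ξ : EuclideanSpace ℝ (Fin 3)) : 0 < jbracket a ξ :=
  Real.sqrt_pos.2 (by positivity)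

lemma norm_le_jb (a : ℝ) (ξ : EuclideanSpace ℝ (Fin 3)) : ‖ξ‖ ≤ jbracket a ξ := by
  rw [← Real.sqrt_sq (norm_nonneg ξ)]
  exact Real.sqrt_le_sqrt (by nlinarith [sq_nonneg a])

lemma min_mul_jb_le {M : ℝ} (hM : 0 < M) (ξ : EuclideanSpace ℝ (Fin 3)) :
    min 1 M * jbracket 1 ξ ≤ jbracket M ξ := by
  have h0 : (0:ℝ) ≤ min 1 M := le_min zero_le_one hM.le
  rw [jbracket, jbracket, ← Real.sqrt_sq h0, ← Real.sqrt_mul (sq_nonneg _)]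
  apply Real.sqrt_le_sqrt
  have h1 : min 1 M ≤ 1 := min_le_left _ _
  have h2 : min 1 M ≤ M := min_le_right _ _
  nlinarith [mul_le_mul h1 h1 h0 zero_le_one, mul_le_mul h2 h2 h0 hM.le, sq_nonneg ‖ξ‖]

lemma jb_le_max_mul {m : ℝ} (hm : 0 < m) (ξ : EuclideanSpace ℝ (Fin 3)) :
    jbracket m ξ ≤ max 1 m * jbracket 1 ξ := by
  have h0 : (0:ℝ) ≤ max 1 m := le_trans zero_le_one (le_max_left _ _)
  rw [jbracket, jbracket, ← Real.sqrt_sq h0, ← Real.sqrt_mul (sq_nonneg _)]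
  apply Real.sqrt_le_sqrt
  have h1 : (1:ℝ) ≤ max 1 m := le_max_left _ _
  have h2 : m ≤ max 1 m := le_max_right _ _
  nlinarith [mul_le_mul h1 h1 zero_le_one h0, mul_le_mul h2 h2 hm.le h0, sq_nonneg ‖ξ‖]

lemma jb_mul_ge {M : ℝ} (hM : 0 < M) (ξ₁ ξ₂ : EuclideanSpace ℝ (Fin 3)) :
    ‖ξ₁‖ * ‖ξ₂‖ + M ^ 2 ≤ jbracket M ξ₁ * jbracket M ξ₂ := by
  rw [jbracket, jbracket, ← Real.sqrt_mul (by positivity),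
    ← Real.sqrt_sq (show (0:ℝ) ≤ ‖ξ₁‖ * ‖ξ₂‖ + M ^ 2 by positivity)]
  apply Real.sqrt_le_sqrt
  nlinarith [mul_nonneg (sq_nonneg M) (sq_nonneg (‖ξ₁‖ - ‖ξ₂‖))]

lemma jb_le_add {M : ℝ} (hM : 0 < M) (ζ₁ ζ₂ : EuclideanSpace ℝ (Fin 3)) :
    jbracket M ζ₁ ≤ jbracket M ζ₂ + ‖ζ₁ - ζ₂‖ := by
  have h1 : ‖ζ₁‖ - ‖ζ₂‖ ≤ ‖ζ₁ - ζ₂‖ := norm_sub_norm_le ζ₁ ζ₂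
  have h2 : ‖ζ₂‖ ≤ jbracket M ζ₂ := norm_le_jb M ζ₂
  have h3 := jb_sq M ζ₂
  have h4 : (0:ℝ) ≤ jbracket M ζ₂ + ‖ζ₁ - ζ₂‖ :=
    add_nonneg (jb_nonneg _ _) (norm_nonneg _)
  rw [jbracket, ← Real.sqrt_sq h4]
  apply Real.sqrt_le_sqrt
  nlinarith [norm_nonneg ζ₁, norm_nonneg (ζ₁ - ζ₂), norm_nonneg ζ₂]

lemma jb_sub_le {M : ℝ} (hM : 0 < M) (ξ₁ ξ₂ : EuclideanSpace ℝ (Fin 3)) :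
    |jbracket M ξ₁ - jbracket M ξ₂| ≤ ‖ξ₁ - ξ₂‖ := by
  rw [abs_sub_le_iff]
  refine ⟨by linarith [jb_le_add hM ξ₁ ξ₂], ?_⟩
  have h := jb_le_add hM ξ₂ ξ₁
  rw [norm_sub_rev] at h
  exact sub_le_iff_le_add'.mpr h

end ResAux

open ResAux


def resCst (m M c : ℝ) : ℝ :=
  π ^ 2 * (2 + 2 / c) * max 1 m * (min (m ^ 2) (4 * M ^ 2 - m ^ 2) + |2 * M ^ 2 - m ^ 2|) /
    ((min 1 M) ^ 2 * min (m ^ 2) (4 * M ^ 2 - m ^ 2))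

lemma resCst_pos {m M c : ℝ} (hm : 0 < m) (hmM : m < 2 * M) (hc : 0 < c) :
    0 < resCst m M c := by
  have hM : 0 < M := by linarith
  have hδ : 0 < min (m ^ 2) (4 * M ^ 2 - m ^ 2) :=
    lt_min (by positivity) (by nlinarith)
  have h1 : (0:ℝ) < min 1 M := lt_min one_pos hM
  have h2 : (0:ℝ) < 2 + 2 / c := by positivity
  have h3 : (0:ℝ) < max 1 m := lt_of_lt_of_le one_pos (le_max_left _ _)
  have h4 : (0:ℝ) ≤ |2 * M ^ 2 - m ^ 2| := abs_nonneg _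
  have hπ : (0:ℝ) < π := pi_pos
  unfold resCst
  positivity

lemma half_lemma (AB xy t : ℝ) (hAB : 0 ≤ AB) (hxy : 0 ≤ xy) (hle : xy ≤ AB)
    (ht1 : t ≤ 1) (ht2 : -1 ≤ t) : AB * (1 - t) ≤ 2 * (AB - xy * t) := by
  rcases le_total t 0 with h | h
  · nlinarith [mul_nonneg hxy (neg_nonneg.2 h),
      mul_nonneg hAB (by linarith : (0:ℝ) ≤ 1 + t)]
  · nlinarith [mul_nonneg (sub_nonneg.2 hle) h,
      mul_nonneg hAB (by linarith : (0:ℝ) ≤ 1 - t)]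

lemma lam_lemma (d K P N : ℝ) (hd : 0 < d) (hK : 0 ≤ K) (hP : 0 ≤ P)
    (h1 : d ≤ N) (h2 : P - K ≤ N) : d * P ≤ 2 * (d + K) * N := by
  rcases le_total P (2 * (d + K)) with h | h
  · calc d * P ≤ d * (2 * (d + K)) := mul_le_mul_of_nonneg_left h hd.le
      _ = 2 * (d + K) * d := by ring
      _ ≤ 2 * (d + K) * N := mul_le_mul_of_nonneg_left h1 (by positivity)
  · nlinarith [mul_nonneg hK (show (0:ℝ) ≤ P - K - d by linarith),
      mul_le_mul_of_nonneg_left h2 (show (0:ℝ) ≤ 2 * (d + K) by positivity)]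

set_option maxHeartbeats 1000000 in
lemma master (m M c : ℝ) (hm : 0 < m) (hmM : m < 2 * M) (hc : 0 < c)
    (x y a g G1 G2 A B t q R ε : ℝ)
    (hε : ε = m ^ 2 - 2 * M ^ 2 ∨ ε = 2 * M ^ 2 - m ^ 2)
    (hx : 0 ≤ x) (hy : 0 ≤ y)
    (ht1 : t ≤ 1) (ht2 : -1 ≤ t)
    (hq0 : 0 ≤ q) (hq : q ≤ π ^ 2 / 2 * (1 - t))
    (hA0 : 0 ≤ A) (hB0 : 0 ≤ B)
    (hABxy : x * y + M ^ 2 ≤ A * B)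
    (hG1 : 0 ≤ G1) (hG2 : 0 ≤ G2)
    (hAG : min 1 M * G1 ≤ A) (hBG : min 1 M * G2 ≤ B)
    (ha : 0 < a) (hg : 0 < g) (hag : a ≤ max 1 m * g)
    (hR : 0 ≤ R)
    (hN : ε + 2 * (A * B - x * y * t) ≤ (2 + 2 / c) * a * R) :
    (resCst m M c)⁻¹ * (G1 * G2 / g) * q ≤ R := by
  have hM : 0 < M := by linarith
  have hδ : 0 < min (m ^ 2) (4 * M ^ 2 - m ^ 2) := lt_min (by positivity) (by nlinarith)
  have hK : 0 ≤ |2 * M ^ 2 - m ^ 2| := abs_nonneg _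
  have hμ0 : 0 < min 1 M := lt_min one_pos hM
  have hmx : (0:ℝ) < max 1 m := lt_of_lt_of_le one_pos (le_max_left _ _)
  have hκ0 : (0:ℝ) < 2 + 2 / c := by positivity
  have hxy : 0 ≤ x * y := mul_nonneg hx hy
  have hABp : 0 < A * B := lt_of_lt_of_le (by nlinarith) hABxy
  have hP0 : 0 ≤ A * B * (1 - t) := mul_nonneg hABp.le (by linarith)
  have hxyt : x * y * t ≤ x * y := by nlinarith
  have hxyAB : x * y ≤ A * B := by nlinarith
  have hhalf := half_lemma (A * B) (x * y) t hABp.le hxy hxyAB ht1 ht2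
  have hNδ : min (m ^ 2) (4 * M ^ 2 - m ^ 2) ≤ ε + 2 * (A * B - x * y * t) := by
    have hcore : M ^ 2 ≤ A * B - x * y * t := by linarith
    rcases hε with h | h <;> rw [h]
    · linarith [min_le_left (m ^ 2) (4 * M ^ 2 - m ^ 2)]
    · linarith [min_le_right (m ^ 2) (4 * M ^ 2 - m ^ 2)]
  have hNP : A * B * (1 - t) - |2 * M ^ 2 - m ^ 2| ≤ ε + 2 * (A * B - x * y * t) := by
    have hεK : -|2 * M ^ 2 - m ^ 2| ≤ ε := by
      rcases hε with h | h <;> rw [h]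
      · linarith [le_abs_self (2 * M ^ 2 - m ^ 2)]
      · linarith [neg_abs_le (2 * M ^ 2 - m ^ 2)]
    linarith
  have hlam := lam_lemma (min (m ^ 2) (4 * M ^ 2 - m ^ 2)) (|2 * M ^ 2 - m ^ 2|)
    (A * B * (1 - t)) (ε + 2 * (A * B - x * y * t)) hδ hK hP0 hNδ hNP
  have hne : (min 1 M) ^ 2 * min (m ^ 2) (4 * M ^ 2 - m ^ 2) ≠ 0 := by positivity
  have hCvId : resCst m M c * ((min 1 M) ^ 2 * min (m ^ 2) (4 * M ^ 2 - m ^ 2)) =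
      π ^ 2 * (2 + 2 / c) * max 1 m *
        (min (m ^ 2) (4 * M ^ 2 - m ^ 2) + |2 * M ^ 2 - m ^ 2|) := by
    rw [resCst, div_mul_cancel₀ _ hne]
  have key : G1 * G2 * q ≤ resCst m M c * R * g := by
    have s1 : (min 1 M) ^ 2 * (G1 * G2) ≤ A * B := by
      calc (min 1 M) ^ 2 * (G1 * G2) = (min 1 M * G1) * (min 1 M * G2) := by ring
        _ ≤ A * B := mul_le_mul hAG hBG (mul_nonneg hμ0.le hG2) hA0
    have c1 : (min 1 M) ^ 2 * (G1 * G2) * q ≤ A * B * (π ^ 2 / 2 * (1 - t)) :=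
      mul_le_mul s1 hq hq0 hABp.le
    have c4 : a * R ≤ max 1 m * g * R := mul_le_mul_of_nonneg_right hag hR
    have big : (min 1 M) ^ 2 * min (m ^ 2) (4 * M ^ 2 - m ^ 2) * (G1 * G2 * q) ≤
        (min 1 M) ^ 2 * min (m ^ 2) (4 * M ^ 2 - m ^ 2) * (resCst m M c * R * g) := by
      calc (min 1 M) ^ 2 * min (m ^ 2) (4 * M ^ 2 - m ^ 2) * (G1 * G2 * q)
          = min (m ^ 2) (4 * M ^ 2 - m ^ 2) * ((min 1 M) ^ 2 * (G1 * G2) * q) := by ring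
        _ ≤ min (m ^ 2) (4 * M ^ 2 - m ^ 2) * (A * B * (π ^ 2 / 2 * (1 - t))) :=
            mul_le_mul_of_nonneg_left c1 hδ.le
        _ = π ^ 2 / 2 * (min (m ^ 2) (4 * M ^ 2 - m ^ 2) * (A * B * (1 - t))) := by ring
        _ ≤ π ^ 2 / 2 * (2 * (min (m ^ 2) (4 * M ^ 2 - m ^ 2) + |2 * M ^ 2 - m ^ 2|) *
              (ε + 2 * (A * B - x * y * t))) := by
            apply mul_le_mul_of_nonneg_left hlam; positivity
        _ = π ^ 2 * (min (m ^ 2) (4 * M ^ 2 - m ^ 2) + |2 * M ^ 2 - m ^ 2|) *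
              (ε + 2 * (A * B - x * y * t)) := by ring
        _ ≤ π ^ 2 * (min (m ^ 2) (4 * M ^ 2 - m ^ 2) + |2 * M ^ 2 - m ^ 2|) *
              ((2 + 2 / c) * a * R) := by
            apply mul_le_mul_of_nonneg_left hN
            positivity
        _ = π ^ 2 * (min (m ^ 2) (4 * M ^ 2 - m ^ 2) + |2 * M ^ 2 - m ^ 2|) * (2 + 2 / c) *
              (a * R) := by ring
        _ ≤ π ^ 2 * (min (m ^ 2) (4 * M ^ 2 - m ^ 2) + |2 * M ^ 2 - m ^ 2|) * (2 + 2 / c) *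
              (max 1 m * g * R) := by
            apply mul_le_mul_of_nonneg_left c4
            positivity
        _ = (min 1 M) ^ 2 * min (m ^ 2) (4 * M ^ 2 - m ^ 2) * (resCst m M c * R * g) := by
            linear_combination (-(R * g)) * hCvId
    exact le_of_mul_le_mul_left big (by positivity)
  have hC := resCst_pos hm hmM hc
  rw [mul_assoc, inv_mul_le_iff₀ hC, div_mul_eq_mul_div, div_le_iff₀ hg]
  exact key

set_option maxHeartbeats 1000000 in
/-- Case 2 lower bound: if `s₁ = s₂`, or `(s₁,s₂) = (−,+)` and
`⟨ξ₁−ξ₂⟩_m ≥ c·min(⟨ξ₁⟩_M,⟨ξ₂⟩_M)`, then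
`|μ^{s₁,s₂}(ξ₁,ξ₂)| ≳ (⟨ξ₁⟩⟨ξ₂⟩/⟨ξ₁−ξ₂⟩)·∠(s₁ξ₁,s₂ξ₂)²`. -/
theorem resonance_case2_lower_bound (m M c : ℝ) (hm : 0 < m) (hmM : m < 2 * M)
    (hc : 0 < c) :
    ∃ C > (0 : ℝ),
      ∀ ξ₁ ξ₂ : EuclideanSpace ℝ (Fin 3), ξ₁ ≠ 0 → ξ₂ ≠ 0 → ∀ s₁ s₂ : ℝ,
        (s₁ = 1 ∨ s₁ = -1) → (s₂ = 1 ∨ s₂ = -1) →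
        (s₁ = s₂ ∨
          (s₁ = -1 ∧ s₂ = 1 ∧
            jbracket m (ξ₁ - ξ₂) ≥ c * min (jbracket M ξ₁) (jbracket M ξ₂))) →
        |resonance m M s₁ s₂ ξ₁ ξ₂| ≥
          C⁻¹ * (jbracket 1 ξ₁ * jbracket 1 ξ₂ / jbracket 1 (ξ₁ - ξ₂)) *
            InnerProductGeometry.angle (s₁ • ξ₁) (s₂ • ξ₂) ^ 2 := by
  have hM : 0 < M := by linarith
  refine ⟨resCst m M c, resCst_pos hm hmM hc, ?_⟩
  intro ξ₁ ξ₂ hξ₁ hξ₂ s₁ s₂ hs₁ hs₂ hcase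
  rw [ge_iff_le]
  -- abbreviations
  have hx : (0:ℝ) < ‖ξ₁‖ := norm_pos_iff.mpr hξ₁
  have hy : (0:ℝ) < ‖ξ₂‖ := norm_pos_iff.mpr hξ₂
  have hA2 := jb_sq M ξ₁
  have hB2 := jb_sq M ξ₂
  have ha2 := jb_sq m (ξ₁ - ξ₂)
  have hd2 : ‖ξ₁ - ξ₂‖ ^ 2 = ‖ξ₁‖ ^ 2 - 2 * ⟪ξ₁, ξ₂⟫ + ‖ξ₂‖ ^ 2 := norm_sub_sq_real ξ₁ ξ₂
  have hA0 := jb_nonneg M ξ₁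
  have hB0 := jb_nonneg M ξ₂
  have ha0 : 0 < jbracket m (ξ₁ - ξ₂) := jb_pos hm _
  have hg0 : 0 < jbracket 1 (ξ₁ - ξ₂) := jb_pos one_pos _
  have hda : ‖ξ₁ - ξ₂‖ ≤ jbracket m (ξ₁ - ξ₂) := norm_le_jb m _
  have hABd := jb_sub_le hM ξ₁ ξ₂
  have hABd1 := (abs_le.1 hABd).1
  have hABd2 := (abs_le.1 hABd).2
  set θ := InnerProductGeometry.angle (s₁ • ξ₁) (s₂ • ξ₂) with hθdef
  have ht1 : Real.cos θ ≤ 1 := Real.cos_le_one θ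
  have ht2 : -1 ≤ Real.cos θ := Real.neg_one_le_cos θ
  have hθ0 : 0 ≤ θ := InnerProductGeometry.angle_nonneg _ _
  have hθπ : θ ≤ π := InnerProductGeometry.angle_le_pi _ _
  have hπ := Real.pi_pos
  have hq : θ ^ 2 ≤ π ^ 2 / 2 * (1 - Real.cos θ) := by
    have h := Real.cos_le_one_sub_mul_cos_sq (x := θ) (by rwa [abs_of_nonneg hθ0])
    have h2 : 2 / π ^ 2 * θ ^ 2 ≤ 1 - Real.cos θ := by linarith
    calc θ ^ 2 = π ^ 2 / 2 * (2 / π ^ 2 * θ ^ 2) := by field_simp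
      _ ≤ π ^ 2 / 2 * (1 - Real.cos θ) := by
          apply mul_le_mul_of_nonneg_left h2; positivity
  have habs1 : |s₁| = 1 := by rcases hs₁ with h | h <;> simp [h]
  have habs2 : |s₂| = 1 := by rcases hs₂ with h | h <;> simp [h]
  have hnorm1 : ‖s₁ • ξ₁‖ = ‖ξ₁‖ := by rw [norm_smul, Real.norm_eq_abs, habs1, one_mul]
  have hnorm2 : ‖s₂ • ξ₂‖ = ‖ξ₂‖ := by rw [norm_smul, Real.norm_eq_abs, habs2, one_mul]
  have htEq : Real.cos θ * (‖ξ₁‖ * ‖ξ₂‖) = s₁ * s₂ * ⟪ξ₁, ξ₂⟫ := by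
    have h := InnerProductGeometry.cos_angle_mul_norm_mul_norm (s₁ • ξ₁) (s₂ • ξ₂)
    rw [hnorm1, hnorm2, real_inner_smul_left, real_inner_smul_right] at h
    rw [← hθdef] at h
    rw [h]; ring
  have hR0 : 0 ≤ |resonance m M s₁ s₂ ξ₁ ξ₂| := abs_nonneg _
  have h2c : (2:ℝ) ≤ 2 + 2 / c := by
    have : (0:ℝ) < 2 / c := by positivity
    linarith
  -- case analysis
  rcases hs₁ with h1 | h1 <;> rcases hs₂ with h2 | h2 <;> subst h1 <;> subst h2
  · -- s₁ = s₂ = 1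
    have hr : ‖ξ₁‖ * ‖ξ₂‖ * Real.cos θ = ⟪ξ₁, ξ₂⟫ := by
      have := htEq; nlinarith [htEq]
    have hres : resonance m M 1 1 ξ₁ ξ₂ =
        jbracket m (ξ₁ - ξ₂) + jbracket M ξ₁ - jbracket M ξ₂ := by
      rw [resonance]; ring
    have hN : (m ^ 2 - 2 * M ^ 2) +
        2 * (jbracket M ξ₁ * jbracket M ξ₂ - ‖ξ₁‖ * ‖ξ₂‖ * Real.cos θ) ≤
        (2 + 2 / c) * jbracket m (ξ₁ - ξ₂) * |resonance m M 1 1 ξ₁ ξ₂| := by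
      have e1 : (m ^ 2 - 2 * M ^ 2) +
          2 * (jbracket M ξ₁ * jbracket M ξ₂ - ‖ξ₁‖ * ‖ξ₂‖ * Real.cos θ) =
          jbracket m (ξ₁ - ξ₂) ^ 2 - (jbracket M ξ₂ - jbracket M ξ₁) ^ 2 := by
        linear_combination (-1 : ℝ) * ha2 - hd2 + hA2 + hB2 - 2 * hr
      have h1' : jbracket m (ξ₁ - ξ₂) + jbracket M ξ₁ - jbracket M ξ₂ ≤
          |resonance m M 1 1 ξ₁ ξ₂| := by
        rw [hres] at *; exact le_abs_self _
      have hv0 : 0 ≤ jbracket m (ξ₁ - ξ₂) + jbracket M ξ₂ - jbracket M ξ₁ := by linarith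
      have hv2 : jbracket m (ξ₁ - ξ₂) + jbracket M ξ₂ - jbracket M ξ₁ ≤
          2 * jbracket m (ξ₁ - ξ₂) := by linarith
      calc (m ^ 2 - 2 * M ^ 2) +
            2 * (jbracket M ξ₁ * jbracket M ξ₂ - ‖ξ₁‖ * ‖ξ₂‖ * Real.cos θ)
          = (jbracket m (ξ₁ - ξ₂) + jbracket M ξ₁ - jbracket M ξ₂) *
              (jbracket m (ξ₁ - ξ₂) + jbracket M ξ₂ - jbracket M ξ₁) := by
            rw [e1]; ring
        _ ≤ |resonance m M 1 1 ξ₁ ξ₂| *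
              (jbracket m (ξ₁ - ξ₂) + jbracket M ξ₂ - jbracket M ξ₁) :=
            mul_le_mul_of_nonneg_right h1' hv0
        _ ≤ |resonance m M 1 1 ξ₁ ξ₂| * (2 * jbracket m (ξ₁ - ξ₂)) :=
            mul_le_mul_of_nonneg_left hv2 hR0
        _ ≤ (2 + 2 / c) * jbracket m (ξ₁ - ξ₂) * |resonance m M 1 1 ξ₁ ξ₂| := by
            nlinarith [mul_nonneg ha0.le hR0]
    exact master m M c hm hmM hc ‖ξ₁‖ ‖ξ₂‖ (jbracket m (ξ₁ - ξ₂)) (jbracket 1 (ξ₁ - ξ₂))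
      (jbracket 1 ξ₁) (jbracket 1 ξ₂) (jbracket M ξ₁) (jbracket M ξ₂) (Real.cos θ) (θ ^ 2)
      (|resonance m M 1 1 ξ₁ ξ₂|) (m ^ 2 - 2 * M ^ 2) (Or.inl rfl) hx.le hy.le ht1 ht2
      (sq_nonneg θ) hq hA0 hB0 (jb_mul_ge hM ξ₁ ξ₂) (jb_nonneg 1 ξ₁) (jb_nonneg 1 ξ₂)
      (min_mul_jb_le hM ξ₁) (min_mul_jb_le hM ξ₂) ha0 hg0 (jb_le_max_mul hm _) hR0 hN
  · -- s₁ = 1, s₂ = -1 : contradiction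
    exfalso
    rcases hcase with h | ⟨h, _, _⟩ <;> norm_num at h
  · -- s₁ = -1, s₂ = 1
    rcases hcase with h | ⟨_, _, hge⟩
    · exfalso; norm_num at h
    have hr : ‖ξ₁‖ * ‖ξ₂‖ * Real.cos θ = -⟪ξ₁, ξ₂⟫ := by nlinarith [htEq]
    have hN : (2 * M ^ 2 - m ^ 2) +
        2 * (jbracket M ξ₁ * jbracket M ξ₂ - ‖ξ₁‖ * ‖ξ₂‖ * Real.cos θ) ≤
        (2 + 2 / c) * jbracket m (ξ₁ - ξ₂) * |resonance m M (-1) 1 ξ₁ ξ₂| := by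
      have e1 : (2 * M ^ 2 - m ^ 2) +
          2 * (jbracket M ξ₁ * jbracket M ξ₂ - ‖ξ₁‖ * ‖ξ₂‖ * Real.cos θ) =
          (jbracket M ξ₁ + jbracket M ξ₂) ^ 2 - jbracket m (ξ₁ - ξ₂) ^ 2 := by
        linear_combination ha2 + hd2 - hA2 - hB2 - 2 * hr
      have h1' : jbracket M ξ₁ + jbracket M ξ₂ - jbracket m (ξ₁ - ξ₂) ≤
          |resonance m M (-1) 1 ξ₁ ξ₂| := by
        have : resonance m M (-1) 1 ξ₁ ξ₂ =
            jbracket m (ξ₁ - ξ₂) - jbracket M ξ₁ - jbracket M ξ₂ := by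
          rw [resonance]; ring
        rw [this]
        have := neg_le_abs (jbracket m (ξ₁ - ξ₂) - jbracket M ξ₁ - jbracket M ξ₂)
        linarith
      have hv0 : 0 ≤ jbracket M ξ₁ + jbracket M ξ₂ + jbracket m (ξ₁ - ξ₂) := by linarith
      have hmin : min (jbracket M ξ₁) (jbracket M ξ₂) ≤ jbracket m (ξ₁ - ξ₂) / c := by
        rw [le_div_iff₀ hc]
        calc min (jbracket M ξ₁) (jbracket M ξ₂) * c
            = c * min (jbracket M ξ₁) (jbracket M ξ₂) := by ring
          _ ≤ jbracket m (ξ₁ - ξ₂) := hge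
      have hsum : jbracket M ξ₁ + jbracket M ξ₂ ≤
          2 * min (jbracket M ξ₁) (jbracket M ξ₂) + ‖ξ₁ - ξ₂‖ := by
        rcases le_total (jbracket M ξ₁) (jbracket M ξ₂) with h | h
        · rw [min_eq_left h]; linarith
        · rw [min_eq_right h]; linarith
      have hfld : (2 + 2 / c) * jbracket m (ξ₁ - ξ₂) =
          2 * jbracket m (ξ₁ - ξ₂) + 2 * (jbracket m (ξ₁ - ξ₂) / c) := by
        field_simp
      have hv2 : jbracket M ξ₁ + jbracket M ξ₂ + jbracket m (ξ₁ - ξ₂) ≤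
          (2 + 2 / c) * jbracket m (ξ₁ - ξ₂) := by
        rw [hfld]; linarith
      calc (2 * M ^ 2 - m ^ 2) +
            2 * (jbracket M ξ₁ * jbracket M ξ₂ - ‖ξ₁‖ * ‖ξ₂‖ * Real.cos θ)
          = (jbracket M ξ₁ + jbracket M ξ₂ - jbracket m (ξ₁ - ξ₂)) *
              (jbracket M ξ₁ + jbracket M ξ₂ + jbracket m (ξ₁ - ξ₂)) := by
            rw [e1]; ring
        _ ≤ |resonance m M (-1) 1 ξ₁ ξ₂| *
              (jbracket M ξ₁ + jbracket M ξ₂ + jbracket m (ξ₁ - ξ₂)) :=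
            mul_le_mul_of_nonneg_right h1' hv0
        _ ≤ |resonance m M (-1) 1 ξ₁ ξ₂| * ((2 + 2 / c) * jbracket m (ξ₁ - ξ₂)) :=
            mul_le_mul_of_nonneg_left hv2 hR0
        _ = (2 + 2 / c) * jbracket m (ξ₁ - ξ₂) * |resonance m M (-1) 1 ξ₁ ξ₂| := by ring
    exact master m M c hm hmM hc ‖ξ₁‖ ‖ξ₂‖ (jbracket m (ξ₁ - ξ₂)) (jbracket 1 (ξ₁ - ξ₂))
      (jbracket 1 ξ₁) (jbracket 1 ξ₂) (jbracket M ξ₁) (jbracket M ξ₂) (Real.cos θ) (θ ^ 2)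
      (|resonance m M (-1) 1 ξ₁ ξ₂|) (2 * M ^ 2 - m ^ 2) (Or.inr rfl) hx.le hy.le ht1 ht2
      (sq_nonneg θ) hq hA0 hB0 (jb_mul_ge hM ξ₁ ξ₂) (jb_nonneg 1 ξ₁) (jb_nonneg 1 ξ₂)
      (min_mul_jb_le hM ξ₁) (min_mul_jb_le hM ξ₂) ha0 hg0 (jb_le_max_mul hm _) hR0 hN
  · -- s₁ = s₂ = -1
    have hr : ‖ξ₁‖ * ‖ξ₂‖ * Real.cos θ = ⟪ξ₁, ξ₂⟫ := by nlinarith [htEq]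
    have hN : (m ^ 2 - 2 * M ^ 2) +
        2 * (jbracket M ξ₁ * jbracket M ξ₂ - ‖ξ₁‖ * ‖ξ₂‖ * Real.cos θ) ≤
        (2 + 2 / c) * jbracket m (ξ₁ - ξ₂) * |resonance m M (-1) (-1) ξ₁ ξ₂| := by
      have e1 : (m ^ 2 - 2 * M ^ 2) +
          2 * (jbracket M ξ₁ * jbracket M ξ₂ - ‖ξ₁‖ * ‖ξ₂‖ * Real.cos θ) =
          jbracket m (ξ₁ - ξ₂) ^ 2 - (jbracket M ξ₂ - jbracket M ξ₁) ^ 2 := by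
        linear_combination (-1 : ℝ) * ha2 - hd2 + hA2 + hB2 - 2 * hr
      have h1' : jbracket m (ξ₁ - ξ₂) + jbracket M ξ₂ - jbracket M ξ₁ ≤
          |resonance m M (-1) (-1) ξ₁ ξ₂| := by
        have : resonance m M (-1) (-1) ξ₁ ξ₂ =
            jbracket m (ξ₁ - ξ₂) - jbracket M ξ₁ + jbracket M ξ₂ := by
          rw [resonance]; ring
        rw [this]
        have := le_abs_self (jbracket m (ξ₁ - ξ₂) - jbracket M ξ₁ + jbracket M ξ₂)
        linarith
      have hv0 : 0 ≤ jbracket m (ξ₁ - ξ₂) + jbracket M ξ₁ - jbracket M ξ₂ := by linarith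
      have hv2 : jbracket m (ξ₁ - ξ₂) + jbracket M ξ₁ - jbracket M ξ₂ ≤
          2 * jbracket m (ξ₁ - ξ₂) := by linarith
      calc (m ^ 2 - 2 * M ^ 2) +
            2 * (jbracket M ξ₁ * jbracket M ξ₂ - ‖ξ₁‖ * ‖ξ₂‖ * Real.cos θ)
          = (jbracket m (ξ₁ - ξ₂) + jbracket M ξ₂ - jbracket M ξ₁) *
              (jbracket m (ξ₁ - ξ₂) + jbracket M ξ₁ - jbracket M ξ₂) := by
            rw [e1]; ring
        _ ≤ |resonance m M (-1) (-1) ξ₁ ξ₂| *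
              (jbracket m (ξ₁ - ξ₂) + jbracket M ξ₁ - jbracket M ξ₂) :=
            mul_le_mul_of_nonneg_right h1' hv0
        _ ≤ |resonance m M (-1) (-1) ξ₁ ξ₂| * (2 * jbracket m (ξ₁ - ξ₂)) :=
            mul_le_mul_of_nonneg_left hv2 hR0
        _ ≤ (2 + 2 / c) * jbracket m (ξ₁ - ξ₂) * |resonance m M (-1) (-1) ξ₁ ξ₂| := by
            nlinarith [mul_nonneg ha0.le hR0]
    exact master m M c hm hmM hc ‖ξ₁‖ ‖ξ₂‖ (jbracket m (ξ₁ - ξ₂)) (jbracket 1 (ξ₁ - ξ₂))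
      (jbracket 1 ξ₁) (jbracket 1 ξ₂) (jbracket M ξ₁) (jbracket M ξ₂) (Real.cos θ) (θ ^ 2)
      (|resonance m M (-1) (-1) ξ₁ ξ₂|) (m ^ 2 - 2 * M ^ 2) (Or.inl rfl) hx.le hy.le ht1 ht2
      (sq_nonneg θ) hq hA0 hB0 (jb_mul_ge hM ξ₁ ξ₂) (jb_nonneg 1 ξ₁) (jb_nonneg 1 ξ₂)
      (min_mul_jb_le hM ξ₁) (min_mul_jb_le hM ξ₂) ha0 hg0 (jb_le_max_mul hm _) hR0 hN
end
end

section
/- Fix masses m, M with 2M > m > 0. There exists C > 0, depending only on m and M, such that for all ξ₁, ξ₂ ∈ ℝ³ and all signs s₁, s₂ ∈ {+1,−1}, the non-resonance bound holds: |μ^{s₁,s₂}(ξ₁,ξ₂)| ≥ C⁻¹ max(⟨ξ₁−ξ₂⟩⁻¹, ⟨ξ₁⟩⁻¹, ⟨ξ₂⟩⁻¹), where ⟨·⟩ := ⟨·⟩₁. -/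
noncomputable section

set_option linter.unusedVariables false

private abbrev V3 := EuclideanSpace ℝ (Fin 3)

private lemma jb_nonneg (a : ℝ) (ξ : V3) : 0 ≤ jbracket a ξ := Real.sqrt_nonneg _

private lemma jb_sq (a : ℝ) (ξ : V3) : jbracket a ξ ^ 2 = ‖ξ‖ ^ 2 + a ^ 2 :=
  Real.sq_sqrt (by positivity)

private lemma norm_le_jb (a : ℝ) (ξ : V3) : ‖ξ‖ ≤ jbracket a ξ := by
  have h := jb_sq a ξ
  nlinarith [jb_nonneg a ξ, norm_nonneg ξ, sq_nonneg a]

private lemma abs_le_jb (a : ℝ) (ξ : V3) : |a| ≤ jbracket a ξ := by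
  have h := jb_sq a ξ
  nlinarith [jb_nonneg a ξ, abs_nonneg a, sq_abs a, sq_nonneg ‖ξ‖]

private lemma one_le_jb1 (ξ : V3) : 1 ≤ jbracket 1 ξ := by
  have := abs_le_jb 1 ξ; simpa using this

private lemma jb_zero (ξ : V3) : jbracket 0 ξ = ‖ξ‖ := by
  simp [jbracket, Real.sqrt_sq (norm_nonneg ξ)]

private lemma jb_neg (a : ℝ) (ξ : V3) : jbracket a (-ξ) = jbracket a ξ := by
  simp [jbracket]

private lemma jb_sub_comm (a : ℝ) (ξ₁ ξ₂ : V3) :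
    jbracket a (ξ₂ - ξ₁) = jbracket a (ξ₁ - ξ₂) := by
  simp [jbracket, norm_sub_rev]

private lemma jb_mono (a b : ℝ) (ξ : V3) (h : b ^ 2 ≤ a ^ 2) :
    jbracket b ξ ≤ jbracket a ξ :=
  Real.sqrt_le_sqrt (by linarith)

private lemma jb_mono_norm (a : ℝ) (ξ₁ ξ₂ : V3) (h : ‖ξ₂‖ ≤ ‖ξ₁‖) :
    jbracket a ξ₂ ≤ jbracket a ξ₁ :=
  Real.sqrt_le_sqrt (by nlinarith [norm_nonneg ξ₂])

private lemma jb_tri (a b : ℝ) (u v : V3) :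
    jbracket (a + b) (u + v) ≤ jbracket a u + jbracket b v := by
  set A := jbracket a u with hA
  set B := jbracket b v with hB
  have hA0 : 0 ≤ A := jb_nonneg a u
  have hB0 : 0 ≤ B := jb_nonneg b v
  have hA2 : A ^ 2 = ‖u‖ ^ 2 + a ^ 2 := jb_sq a u
  have hB2 : B ^ 2 = ‖v‖ ^ 2 + b ^ 2 := jb_sq b v
  have hAB : ‖u‖ * ‖v‖ + a * b ≤ A * B := by
    have h1 : (‖u‖ * ‖v‖ + a * b) ^ 2 ≤ (A * B) ^ 2 := by
      nlinarith [sq_nonneg (‖u‖ * b - ‖v‖ * a)]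
    exact (abs_le_of_sq_le_sq' h1 (mul_nonneg hA0 hB0)).2
  have key : ‖u + v‖ ^ 2 + (a + b) ^ 2 ≤ (A + B) ^ 2 := by
    have htri : ‖u + v‖ ≤ ‖u‖ + ‖v‖ := norm_add_le u v
    nlinarith [norm_nonneg (u + v), norm_nonneg u, norm_nonneg v]
  calc jbracket (a + b) (u + v) = Real.sqrt (‖u + v‖ ^ 2 + (a + b) ^ 2) := rfl
    _ ≤ Real.sqrt ((A + B) ^ 2) := Real.sqrt_le_sqrt key
    _ = A + B := Real.sqrt_sq (by linarith)

/-- `⟨ξ⟩_a ≤ max |a| 1 * ⟨ξ⟩₁`. -/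
private lemma jb_le_K (a : ℝ) (ξ : V3) : jbracket a ξ ≤ max |a| 1 * jbracket 1 ξ := by
  have hK : (1:ℝ) ≤ max |a| 1 := le_max_right _ _
  have hKa : |a| ≤ max |a| 1 := le_max_left _ _
  have h1 : ‖ξ‖ ^ 2 + a ^ 2 ≤ (max |a| 1 * jbracket 1 ξ) ^ 2 := by
    have := jb_sq 1 ξ
    nlinarith [sq_abs a, sq_nonneg ‖ξ‖, abs_nonneg a,
      mul_le_mul hKa hKa (abs_nonneg a) (by linarith),
      mul_le_mul hK hK zero_le_one (by linarith)]
  calc jbracket a ξ = Real.sqrt (‖ξ‖ ^ 2 + a ^ 2) := rfl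
    _ ≤ Real.sqrt ((max |a| 1 * jbracket 1 ξ) ^ 2) := Real.sqrt_le_sqrt h1
    _ = _ := Real.sqrt_sq (mul_nonneg (by positivity) (jb_nonneg 1 ξ))

/-- gap: `a²-b² ≤ (⟨ξ⟩_a - ⟨ξ⟩_b) * 2⟨ξ⟩_a` when `b² ≤ a²`. -/
private lemma jb_gap (a b : ℝ) (ξ : V3) (h : b ^ 2 ≤ a ^ 2) :
    a ^ 2 - b ^ 2 ≤ (jbracket a ξ - jbracket b ξ) * (2 * jbracket a ξ) := by
  have hA := jb_sq a ξ; have hB := jb_sq b ξ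
  nlinarith [sq_nonneg (jbracket a ξ - jbracket b ξ)]

private lemma pp1 (m M : ℝ) (hm : 0 < m) (ξ₁ ξ₂ : V3) :
    m ^ 2 ≤ (2 * max m 1) * (resonance m M 1 1 ξ₁ ξ₂ * jbracket 1 (ξ₁ - ξ₂)) := by
  set d := ξ₁ - ξ₂ with hd
  have h2 : jbracket M ξ₂ ≤ ‖d‖ + jbracket M ξ₁ := by
    have h := jb_tri 0 M (ξ₂ - ξ₁) ξ₁
    rw [zero_add, sub_add_cancel, jb_zero] at h
    rwa [show ‖ξ₂ - ξ₁‖ = ‖d‖ from norm_sub_rev _ _] at h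
  have hmu : jbracket m d - ‖d‖ ≤ resonance m M 1 1 ξ₁ ξ₂ := by
    simp only [resonance, one_mul, ← hd]; linarith
  have hsq : jbracket m d ^ 2 = ‖d‖ ^ 2 + m ^ 2 := jb_sq m d
  have hr : ‖d‖ ≤ jbracket m d := norm_le_jb m d
  have hK : jbracket m d ≤ max m 1 * jbracket 1 d := by
    have := jb_le_K m d; rwa [abs_of_pos hm] at this
  have hJ1 : 1 ≤ jbracket 1 d := one_le_jb1 d
  have hK1 : (1:ℝ) ≤ max m 1 := le_max_right _ _
  nlinarith [norm_nonneg d, mul_le_mul_of_nonneg_left hK (by linarith : (0:ℝ) ≤ jbracket m d - ‖d‖),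
    mul_le_mul_of_nonneg_right hmu (by positivity : (0:ℝ) ≤ max m 1 * jbracket 1 d)]

private lemma pp2 (m M : ℝ) (hm : 0 < m) (hmM : m < 2 * M) (ξ₁ ξ₂ : V3) :
    m * (2 * M - m) ≤ (2 * max M 1) * (resonance m M 1 1 ξ₁ ξ₂ * jbracket 1 ξ₁) := by
  have hM : 0 < M := by linarith
  have h2 : jbracket M ξ₂ ≤ jbracket m (ξ₁ - ξ₂) + jbracket (M - m) ξ₁ := by
    have h := jb_tri m (M - m) (ξ₂ - ξ₁) ξ₁
    rw [show m + (M - m) = M by ring, sub_add_cancel, jb_sub_comm] at h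
    exact h
  have hmu : jbracket M ξ₁ - jbracket (M - m) ξ₁ ≤ resonance m M 1 1 ξ₁ ξ₂ := by
    simp only [resonance, one_mul]; linarith
  have hgap := jb_gap M (M - m) ξ₁ (by nlinarith)
  have hmono := jb_mono M (M - m) ξ₁ (by nlinarith)
  have hK : jbracket M ξ₁ ≤ max M 1 * jbracket 1 ξ₁ := by
    have := jb_le_K M ξ₁; rwa [abs_of_pos hM] at this
  have hJ1 : 1 ≤ jbracket 1 ξ₁ := one_le_jb1 ξ₁
  have hK1 : (1:ℝ) ≤ max M 1 := le_max_right _ _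
  have hMn := jb_nonneg M ξ₁
  nlinarith [mul_le_mul_of_nonneg_left hK (by linarith : (0:ℝ) ≤ jbracket M ξ₁ - jbracket (M-m) ξ₁),
    mul_le_mul_of_nonneg_right hmu (by positivity : (0:ℝ) ≤ max M 1 * jbracket 1 ξ₁)]

private lemma mp1 (m M : ℝ) (hm : 0 < m) (hmM : m < 2 * M) (ξ₁ ξ₂ : V3) :
    4 * M ^ 2 - m ^ 2 ≤ (2 * max (2 * M) 1) * (-resonance m M (-1) 1 ξ₁ ξ₂ * jbracket 1 (ξ₁ - ξ₂)) := by
  have hM : 0 < M := by linarith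
  set d := ξ₁ - ξ₂ with hd
  have h2 : jbracket (2 * M) d ≤ jbracket M ξ₁ + jbracket M ξ₂ := by
    have h := jb_tri M M ξ₁ (-ξ₂)
    rw [jb_neg, show ξ₁ + -ξ₂ = d by rw [hd]; abel, show M + M = 2 * M by ring] at h
    exact h
  have hmu : jbracket (2 * M) d - jbracket m d ≤ -resonance m M (-1) 1 ξ₁ ξ₂ := by
    simp only [resonance, ← hd]; linarith
  have hgap := jb_gap (2 * M) m d (by nlinarith)
  have hmono := jb_mono (2 * M) m d (by nlinarith)
  have hK : jbracket (2 * M) d ≤ max (2 * M) 1 * jbracket 1 d := by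
    have := jb_le_K (2 * M) d; rwa [abs_of_pos (by linarith)] at this
  have hJ1 : 1 ≤ jbracket 1 d := one_le_jb1 d
  have hK1 : (1:ℝ) ≤ max (2 * M) 1 := le_max_right _ _
  have hMn := jb_nonneg (2 * M) d
  nlinarith [mul_le_mul_of_nonneg_left hK (by linarith : (0:ℝ) ≤ jbracket (2*M) d - jbracket m d),
    mul_le_mul_of_nonneg_right hmu (by positivity : (0:ℝ) ≤ max (2 * M) 1 * jbracket 1 d)]

private lemma mp2 (m M : ℝ) (hm : 0 < m) (hmM : m < 2 * M) (ξ₁ ξ₂ : V3) :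
    m * (2 * M - m) ≤ (2 * max M 1) * (-resonance m M (-1) 1 ξ₁ ξ₂ * jbracket 1 ξ₁) := by
  have hM : 0 < M := by linarith
  have h2 : jbracket m (ξ₁ - ξ₂) ≤ jbracket M ξ₂ + jbracket (m - M) ξ₁ := by
    have h := jb_tri M (m - M) (-ξ₂) ξ₁
    rw [jb_neg, show -ξ₂ + ξ₁ = ξ₁ - ξ₂ by abel, show M + (m - M) = m by ring] at h
    exact h
  have hmu : jbracket M ξ₁ - jbracket (m - M) ξ₁ ≤ -resonance m M (-1) 1 ξ₁ ξ₂ := by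
    simp only [resonance]; linarith
  have hgap := jb_gap M (m - M) ξ₁ (by nlinarith)
  have hmono := jb_mono M (m - M) ξ₁ (by nlinarith)
  have hK : jbracket M ξ₁ ≤ max M 1 * jbracket 1 ξ₁ := by
    have := jb_le_K M ξ₁; rwa [abs_of_pos hM] at this
  have hJ1 : 1 ≤ jbracket 1 ξ₁ := one_le_jb1 ξ₁
  have hK1 : (1:ℝ) ≤ max M 1 := le_max_right _ _
  have hMn := jb_nonneg M ξ₁
  nlinarith [mul_le_mul_of_nonneg_left hK (by linarith : (0:ℝ) ≤ jbracket M ξ₁ - jbracket (m-M) ξ₁),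
    mul_le_mul_of_nonneg_right hmu (by positivity : (0:ℝ) ≤ max M 1 * jbracket 1 ξ₁)]

private lemma conv {c num den t J : ℝ} (hden : 0 < den) (hJ : 0 ≤ J)
    (hc : c ≤ num / den) (h : num ≤ den * (t * J)) : c ≤ |t| * J := by
  have h1 : num / den ≤ t * J := (div_le_iff₀ hden).2 (by linarith [mul_comm den (t * J)])
  have h2 : t * J ≤ |t| * J := mul_le_mul_of_nonneg_right (le_abs_self t) hJ
  linarith

private lemma combine {c t A B D : ℝ} (hA : 1 ≤ A) (hB : 1 ≤ B) (hD : 1 ≤ D)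
    (h1 : c ≤ t * A) (h2 : c ≤ t * B) (h3 : c ≤ t * D) :
    c * max A⁻¹ (max B⁻¹ D⁻¹) ≤ t := by
  have hA0 : (0:ℝ) < A := by linarith
  have hB0 : (0:ℝ) < B := by linarith
  have hD0 : (0:ℝ) < D := by linarith
  rcases max_cases A⁻¹ (max B⁻¹ D⁻¹) with ⟨he, _⟩ | ⟨he, _⟩ <;> rw [he]
  · rw [← div_eq_mul_inv, div_le_iff₀ hA0]; linarith [mul_comm t A]
  · rcases max_cases B⁻¹ D⁻¹ with ⟨he2, _⟩ | ⟨he2, _⟩ <;> rw [he2]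
    · rw [← div_eq_mul_inv, div_le_iff₀ hB0]; linarith [mul_comm t B]
    · rw [← div_eq_mul_inv, div_le_iff₀ hD0]; linarith [mul_comm t D]

private lemma case_pp (m M : ℝ) (hm : 0 < m) (hmM : m < 2 * M) (ξ₁ ξ₂ : V3) (c : ℝ)
    (hc : c ≤ min m (min (m ^ 2 / (2 * max m 1)) (m * (2 * M - m) / (2 * max M 1)))) :
    c ≤ |resonance m M 1 1 ξ₁ ξ₂| * jbracket 1 (ξ₁ - ξ₂) ∧
    c ≤ |resonance m M 1 1 ξ₁ ξ₂| * jbracket 1 ξ₁ ∧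
    c ≤ |resonance m M 1 1 ξ₁ ξ₂| * jbracket 1 ξ₂ := by
  set μ := resonance m M 1 1 ξ₁ ξ₂ with hμ
  have b1 : c ≤ |μ| * jbracket 1 (ξ₁ - ξ₂) :=
    conv (by positivity) (jb_nonneg _ _)
      (hc.trans ((min_le_right _ _).trans (min_le_left _ _))) (pp1 m M hm ξ₁ ξ₂)
  have b2 : c ≤ |μ| * jbracket 1 ξ₁ :=
    conv (by positivity) (jb_nonneg _ _)
      (hc.trans ((min_le_right _ _).trans (min_le_right _ _))) (pp2 m M hm hmM ξ₁ ξ₂)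
  refine ⟨b1, b2, ?_⟩
  rcases le_total ‖ξ₂‖ ‖ξ₁‖ with h | h
  · have hmono : jbracket M ξ₂ ≤ jbracket M ξ₁ := jb_mono_norm M ξ₁ ξ₂ h
    have habs : m ≤ jbracket m (ξ₁ - ξ₂) := by
      have := abs_le_jb m (ξ₁ - ξ₂); rwa [abs_of_pos hm] at this
    have hmm : m ≤ μ := by rw [hμ]; simp only [resonance, one_mul]; linarith
    have hcm : c ≤ m := hc.trans (min_le_left _ _)
    nlinarith [one_le_jb1 ξ₂, le_abs_self μ, abs_nonneg μ]
  · have hmono : jbracket 1 ξ₁ ≤ jbracket 1 ξ₂ := jb_mono_norm 1 ξ₂ ξ₁ h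
    exact b2.trans (mul_le_mul_of_nonneg_left hmono (abs_nonneg μ))

private lemma case_mp (m M : ℝ) (hm : 0 < m) (hmM : m < 2 * M) (ξ₁ ξ₂ : V3) (c : ℝ)
    (hc : c ≤ min ((4 * M ^ 2 - m ^ 2) / (2 * max (2 * M) 1)) (m * (2 * M - m) / (2 * max M 1))) :
    c ≤ |resonance m M (-1) 1 ξ₁ ξ₂| * jbracket 1 (ξ₁ - ξ₂) ∧
    c ≤ |resonance m M (-1) 1 ξ₁ ξ₂| * jbracket 1 ξ₁ ∧
    c ≤ |resonance m M (-1) 1 ξ₁ ξ₂| * jbracket 1 ξ₂ := by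
  set μ := resonance m M (-1) 1 ξ₁ ξ₂ with hμ
  have hsym : resonance m M (-1) 1 ξ₂ ξ₁ = μ := by
    rw [hμ]; simp only [resonance]; rw [jb_sub_comm]; ring
  have b1 : c ≤ |(-μ)| * jbracket 1 (ξ₁ - ξ₂) :=
    conv (by positivity) (jb_nonneg _ _) (hc.trans (min_le_left _ _)) (mp1 m M hm hmM ξ₁ ξ₂)
  have b2 : c ≤ |(-μ)| * jbracket 1 ξ₁ :=
    conv (by positivity) (jb_nonneg _ _) (hc.trans (min_le_right _ _)) (mp2 m M hm hmM ξ₁ ξ₂)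
  have b3 : c ≤ |(-μ)| * jbracket 1 ξ₂ := by
    have h := mp2 m M hm hmM ξ₂ ξ₁
    rw [hsym] at h
    exact conv (by positivity) (jb_nonneg _ _) (hc.trans (min_le_right _ _)) h
  rw [abs_neg] at b1 b2 b3
  exact ⟨b1, b2, b3⟩

/-- The non-resonance bound: for all signs,
`|μ^{s₁,s₂}(ξ₁,ξ₂)| ≳ max(⟨ξ₁−ξ₂⟩⁻¹,⟨ξ₁⟩⁻¹,⟨ξ₂⟩⁻¹)`. -/
theorem resonance_nonresonance_bound (m M : ℝ) (hm : 0 < m) (hmM : m < 2 * M) :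
    ∃ C > (0 : ℝ),
      ∀ ξ₁ ξ₂ : EuclideanSpace ℝ (Fin 3), ∀ s₁ s₂ : ℝ,
        (s₁ = 1 ∨ s₁ = -1) → (s₂ = 1 ∨ s₂ = -1) →
        |resonance m M s₁ s₂ ξ₁ ξ₂| ≥
          C⁻¹ * max (jbracket 1 (ξ₁ - ξ₂))⁻¹ (max (jbracket 1 ξ₁)⁻¹ (jbracket 1 ξ₂)⁻¹) := by
  have hM : 0 < M := by linarith
  set cpp : ℝ := min m (min (m ^ 2 / (2 * max m 1)) (m * (2 * M - m) / (2 * max M 1))) with hcpp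
  set cmp : ℝ := min ((4 * M ^ 2 - m ^ 2) / (2 * max (2 * M) 1)) (m * (2 * M - m) / (2 * max M 1))
    with hcmp
  set c : ℝ := min (min cpp cmp) m with hcdef
  have hcpp0 : 0 < cpp := by
    refine lt_min hm (lt_min (by positivity) (div_pos (by nlinarith) (by positivity)))
  have hcmp0 : 0 < cmp := by
    refine lt_min (div_pos (by nlinarith) (by positivity)) (div_pos (by nlinarith) (by positivity))
  have hc0 : 0 < c := lt_min (lt_min hcpp0 hcmp0) hm
  refine ⟨c⁻¹, inv_pos.2 hc0, ?_⟩
  intro ξ₁ ξ₂ s₁ s₂ hs₁ hs₂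
  rw [ge_iff_le, inv_inv]
  have hcm : c ≤ m := min_le_right _ _
  rcases hs₁ with rfl | rfl <;> rcases hs₂ with rfl | rfl
  · obtain ⟨b1, b2, b3⟩ :=
      case_pp m M hm hmM ξ₁ ξ₂ c ((min_le_left _ _).trans (min_le_left _ _))
    exact combine (one_le_jb1 _) (one_le_jb1 _) (one_le_jb1 _) b1 b2 b3
  · -- s₁ = 1, s₂ = -1
    set μ := resonance m M 1 (-1) ξ₁ ξ₂ with hμ
    have hmm : m ≤ μ := by
      have h1 := abs_le_jb m (ξ₁ - ξ₂)
      rw [abs_of_pos hm] at h1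
      have h2 := jb_nonneg M ξ₁; have h3 := jb_nonneg M ξ₂
      rw [hμ]; simp only [resonance, one_mul, neg_one_mul]; linarith
    have hb : ∀ ξ : V3, c ≤ |μ| * jbracket 1 ξ := fun ξ => by
      nlinarith [one_le_jb1 ξ, le_abs_self μ, abs_nonneg μ]
    exact combine (one_le_jb1 _) (one_le_jb1 _) (one_le_jb1 _) (hb _) (hb _) (hb _)
  · obtain ⟨b1, b2, b3⟩ :=
      case_mp m M hm hmM ξ₁ ξ₂ c ((min_le_left _ _).trans (min_le_right _ _))
    exact combine (one_le_jb1 _) (one_le_jb1 _) (one_le_jb1 _) b1 b2 b3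
  · -- s₁ = s₂ = -1
    have hsym2 : resonance m M (-1) (-1) ξ₁ ξ₂ = resonance m M 1 1 ξ₂ ξ₁ := by
      simp only [resonance]; rw [jb_sub_comm]; ring
    obtain ⟨b1, b2, b3⟩ :=
      case_pp m M hm hmM ξ₂ ξ₁ c ((min_le_left _ _).trans (min_le_left _ _))
    rw [jb_sub_comm] at b1
    rw [hsym2]
    exact combine (one_le_jb1 _) (one_le_jb1 _) (one_le_jb1 _) b1 b3 b2
end
end
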